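/- Let (μ, u) satisfy the sketched Galerkin condition Π_K^Θ (Au − μu) = 0 with u ∈ K. If Θ is an ε-embedding (ε<1) for V = K + AK, then ‖(A − μI)u‖ ≤ sqrt((1+ε)/(1−ε)) · ‖(I − Π_K) A Π_K‖ · ‖u‖. -/

import Mathlib

/-!
The residual `r = A u - μ u` and `s = (I - Π_K) A Π_K u = r - Π_K r` both lie in `V = K + A K`.
The sketched Galerkin condition makes `Θ r` orthogonal to `Θ (Π_K r)`, so Pythagoras gives
`‖Θ r‖ ≤ ‖Θ r - Θ (Π_K r)‖ = ‖Θ s‖`. The embedding property on `V` turns this into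
`(1 - ε) ‖r‖² ≤ ‖Θ r‖² ≤ ‖Θ s‖² ≤ (1 + ε) ‖s‖²`, and `‖s‖ ≤ ‖(I - Π_K) A Π_K‖ ‖u‖`.
-/

theorem le_sqrt_div_mul_of_mul_sq_le {a b c d : ℝ} (hb : 0 ≤ b) (hd : 0 < d)
    (h : d * a ^ 2 ≤ c * b ^ 2) : a ≤ √(c / d) * b := by
  rw [← Real.sqrt_sq hb, ← Real.sqrt_mul' _ (sq_nonneg b)]
  refine (le_abs_self a).trans (Real.abs_le_sqrt ?_)
  rw [div_mul_eq_mul_div, le_div_iff₀ hd]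
  linarith

section InnerProductSpace

variable {𝕜 E F : Type*} [RCLike 𝕜] [NormedAddCommGroup E] [InnerProductSpace 𝕜 E]
  [NormedAddCommGroup F] [InnerProductSpace 𝕜 F]

theorem norm_le_norm_sub_of_inner_eq_zero {y z : E} (h : inner 𝕜 z y = 0) : ‖y‖ ≤ ‖y - z‖ := by
  have hyz : ‖y - z‖ ^ 2 = ‖y‖ ^ 2 + ‖z‖ ^ 2 := by
    rw [norm_sub_sq (𝕜 := 𝕜), inner_eq_zero_symm.mp h]
    simp
  exact (pow_le_pow_iff_left₀ (norm_nonneg y) (norm_nonneg _) two_ne_zero).mp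
    (hyz ▸ le_add_of_nonneg_right (sq_nonneg ‖z‖))

def IsSubspaceEmbedding (Θ : E → F) (V : Submodule 𝕜 E) (ε : ℝ) : Prop :=
  ∀ a ∈ V, ∀ b ∈ V, ‖inner 𝕜 a b - inner 𝕜 (Θ a) (Θ b)‖ ≤ ε * ‖a‖ * ‖b‖

namespace IsSubspaceEmbedding

variable {Θ : E → F} {V : Submodule 𝕜 E} {ε : ℝ} {x y : E}

theorem abs_norm_sq_sub_norm_sq_le (hΘ : IsSubspaceEmbedding Θ V ε) (hx : x ∈ V) :
    |‖x‖ ^ 2 - ‖Θ x‖ ^ 2| ≤ ε * ‖x‖ ^ 2 := by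
  have h := hΘ x hx x hx
  rw [inner_self_eq_norm_sq_to_K, inner_self_eq_norm_sq_to_K, ← RCLike.ofReal_pow,
    ← RCLike.ofReal_pow, ← RCLike.ofReal_sub, RCLike.norm_ofReal] at h
  linarith

theorem norm_sq_le (hΘ : IsSubspaceEmbedding Θ V ε) (hx : x ∈ V) :
    ‖Θ x‖ ^ 2 ≤ (1 + ε) * ‖x‖ ^ 2 := by
  linarith [neg_abs_le (‖x‖ ^ 2 - ‖Θ x‖ ^ 2), hΘ.abs_norm_sq_sub_norm_sq_le hx]

theorem le_norm_sq (hΘ : IsSubspaceEmbedding Θ V ε) (hx : x ∈ V) :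
    (1 - ε) * ‖x‖ ^ 2 ≤ ‖Θ x‖ ^ 2 := by
  linarith [le_abs_self (‖x‖ ^ 2 - ‖Θ x‖ ^ 2), hΘ.abs_norm_sq_sub_norm_sq_le hx]

theorem norm_le_sqrt_mul_norm_of_norm_le (hΘ : IsSubspaceEmbedding Θ V ε) (hε : ε < 1)
    (hx : x ∈ V) (hy : y ∈ V) (h : ‖Θ x‖ ≤ ‖Θ y‖) :
    ‖x‖ ≤ √((1 + ε) / (1 - ε)) * ‖y‖ := by
  refine le_sqrt_div_mul_of_mul_sq_le (norm_nonneg y) (sub_pos.mpr hε) ?_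
  calc (1 - ε) * ‖x‖ ^ 2 ≤ ‖Θ x‖ ^ 2 := hΘ.le_norm_sq hx
    _ ≤ ‖Θ y‖ ^ 2 := by gcongr
    _ ≤ (1 + ε) * ‖y‖ ^ 2 := hΘ.norm_sq_le hy

end IsSubspaceEmbedding

theorem Submodule.sub_starProjection_residual_eq (K : Submodule 𝕜 E) [K.HasOrthogonalProjection]
    (A : E →L[𝕜] E) (μ : 𝕜) {u : E} (hu : u ∈ K) :
    (A u - μ • u) - K.starProjection (A u - μ • u) =
      ((ContinuousLinearMap.id 𝕜 E - K.starProjection) ∘L (A ∘L K.starProjection)) u := by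
  have hPu : K.starProjection u = u := K.starProjection_eq_self_iff.mpr hu
  simp only [ContinuousLinearMap.comp_apply, FunLike.coe_sub, Pi.sub_apply,
    ContinuousLinearMap.id_apply, map_sub, map_smul, hPu]
  abel

end InnerProductSpace

open scoped ComplexInnerProductSpace

/-- Residual bound for a sketched Galerkin pair (μ, u). -/
theorem sketched_galerkin_residual_bound {n k : ℕ}
    (K : Submodule ℂ (EuclideanSpace ℂ (Fin n)))
    (A : EuclideanSpace ℂ (Fin n) →L[ℂ] EuclideanSpace ℂ (Fin n))
    (Θ : EuclideanSpace ℂ (Fin n) →L[ℂ] EuclideanSpace ℂ (Fin k))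
    (μ : ℂ) (u : EuclideanSpace ℂ (Fin n)) (hu : u ∈ K)
    (hGal : ∀ v ∈ K, ⟪Θ v, Θ (A u - μ • u)⟫ = 0)
    (ε : ℝ) (hε : ε < 1)
    (hemb : ∀ a ∈ K ⊔ K.map (A : EuclideanSpace ℂ (Fin n) →ₗ[ℂ] EuclideanSpace ℂ (Fin n)),
      ∀ b ∈ K ⊔ K.map (A : EuclideanSpace ℂ (Fin n) →ₗ[ℂ] EuclideanSpace ℂ (Fin n)),
      ‖⟪a, b⟫ - ⟪Θ a, Θ b⟫‖ ≤ ε * ‖a‖ * ‖b‖) :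
    ‖A u - μ • u‖ ≤ Real.sqrt ((1 + ε) / (1 - ε)) *
      ‖(ContinuousLinearMap.id ℂ (EuclideanSpace ℂ (Fin n)) -
          K.subtypeL.comp K.orthogonalProjection).comp
        (A.comp (K.subtypeL.comp K.orthogonalProjection))‖ * ‖u‖ := by
  set V := K ⊔ K.map (A : EuclideanSpace ℂ (Fin n) →ₗ[ℂ] EuclideanSpace ℂ (Fin n))
  set B := (ContinuousLinearMap.id ℂ (EuclideanSpace ℂ (Fin n)) - K.starProjection) ∘L
    (A ∘L K.starProjection)
  set r := A u - μ • u
  have hKV : K ≤ V := le_sup_left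
  have hrV : r ∈ V :=
    V.sub_mem (Submodule.mem_sup_right (Submodule.mem_map_of_mem hu)) (V.smul_mem μ (hKV hu))
  have hPr : K.starProjection r ∈ K := K.starProjection_apply_mem r
  have hΘ : ‖Θ r‖ ≤ ‖Θ (r - K.starProjection r)‖ := by
    rw [map_sub Θ r]
    exact norm_le_norm_sub_of_inner_eq_zero (hGal _ hPr)
  calc ‖r‖ ≤ √((1 + ε) / (1 - ε)) * ‖r - K.starProjection r‖ :=
        IsSubspaceEmbedding.norm_le_sqrt_mul_norm_of_norm_le hemb hε hrV
          (V.sub_mem hrV (hKV hPr)) hΘ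
    _ = √((1 + ε) / (1 - ε)) * ‖B u‖ := by rw [K.sub_starProjection_residual_eq A μ hu]
    _ ≤ √((1 + ε) / (1 - ε)) * (‖B‖ * ‖u‖) := by gcongr; exact B.le_opNorm u
    _ = √((1 + ε) / (1 - ε)) * ‖B‖ * ‖u‖ := (mul_assoc _ _ _).symm
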